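/- arXiv:2411.07782 — 2 statements merged into one kernel-verified Lean document; each statement's English description precedes it below -/
import Mathlib

section
/- Let V = {v^1, …, v^k} be binary vectors of length d, u^i = 1^d − v^i, and let T1 = ∏_{i=1}^{k} ∏_{j=1}^{d} {0, u^i_j} be the ED string over {0,1} whose (i,j)-th segment is the set of one-letter strings {0, u^i_j}. Then for all a, b ∈ [1,k], the string 0^{(a−1)d} · v^b · 0^{(k−a)d} (where v^b is viewed as a length-d binary string) belongs to L(T1) if and only if v^a and v^b are orthogonal, i.e., Σ_{j=1}^{d} v^a_j · v^b_j = 0. -/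
/-!
Every segment of `T1` contains the letter `0`, so the zero padding of the word matches every
block of `T1` other than block `a`, and membership reduces to that block: the letter `v^b_j`
lies in `{0, 1 - v^a_j}` exactly when `v^a_j v^b_j = 0`.
-/

/-- The language of an elastic-degenerate string, given as the list of its segments
(each segment is a set of strings over the alphabet `α`). -/
def EDLang {α : Type*} : List (Set (List α)) → Set (List α)
  | [] => {[]}
  | S :: rest => { w | ∃ s ∈ S, ∃ t ∈ EDLang rest, w = s ++ t }

namespace List

variable {α β ι : Type*} {R : α → β → Prop}

theorem forall₂_append_iff_of_length_eq {l₁ u₁ : List α} {l₂ u₂ : List β}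
    (h : l₁.length = l₂.length) :
    Forall₂ R (l₁ ++ u₁) (l₂ ++ u₂) ↔ Forall₂ R l₁ l₂ ∧ Forall₂ R u₁ u₂ := by
  induction l₁ generalizing l₂ with
  | nil => simp_all [eq_comm (a := 0), length_eq_zero_iff]
  | cons x xs ih =>
    cases l₂ with
    | nil => simp at h
    | cons y ys => simp [ih (Nat.succ_inj.mp h), and_assoc]

theorem forall₂_replicate_left_iff {a : α} {n : ℕ} {l : List β} :
    Forall₂ R (replicate n a) l ↔ l.length = n ∧ ∀ b ∈ l, R a b := by
  induction l generalizing n with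
  | nil => simp [eq_comm (a := 0)]
  | cons b l ih => cases n <;> simp [replicate_succ, ih, and_left_comm]

theorem length_flatMap_of_forall_length_eq {l : List ι} {f : ι → List β} {n : ℕ}
    (h : ∀ i ∈ l, (f i).length = n) : (l.flatMap f).length = l.length * n := by
  induction l with
  | nil => simp
  | cons i l ih => simp_all [Nat.succ_mul, Nat.add_comm]

theorem forall₂_replicate_append_append_replicate_iff {z : α} {w : List α} {P M S : List β}
    {m n : ℕ} (hP : ∀ b ∈ P, R z b) (hS : ∀ b ∈ S, R z b) (hm : P.length = m)
    (hn : S.length = n) (hM : M.length = w.length) :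
    Forall₂ R (replicate m z ++ w ++ replicate n z) (P ++ M ++ S) ↔ Forall₂ R w M := by
  rw [forall₂_append_iff_of_length_eq (by simp [hm, hM]),
    forall₂_append_iff_of_length_eq (by simp [hm])]
  simp only [forall₂_replicate_left_iff, hm, hn, true_and]
  exact ⟨fun h => h.1.2, fun h => ⟨⟨hP, h⟩, hS⟩⟩

end List

theorem mem_EDLang_map_image_singleton_iff {α : Type*} {w : List α} {cs : List (Set α)} :
    w ∈ EDLang (cs.map (Set.image fun c => [c])) ↔ List.Forall₂ (· ∈ ·) w cs := by
  induction cs generalizing w with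
  | nil => simp [EDLang]
  | cons C cs ih =>
    simp only [List.map_cons, EDLang, Set.mem_ofPred_eq, ih, List.forall₂_cons_right_iff,
      Set.mem_image]
    constructor
    · rintro ⟨_, ⟨c, hc, rfl⟩, t, ht, rfl⟩
      exact ⟨c, t, hc, ht, rfl⟩
    · rintro ⟨c, t, hc, ht, rfl⟩
      exact ⟨[c], ⟨c, hc, rfl⟩, t, ht, rfl⟩

theorem mem_zero_one_sub_iff_mul_eq_zero (x y : Fin 2) :
    y ∈ ({0, 1 - x} : Set (Fin 2)) ↔ (x : ℕ) * y = 0 := by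
  fin_cases x <;> fin_cases y <;> simp

/-- The block of `T1` belonging to `x`, with each segment given by its letters rather than by
its one-letter strings. -/
def complSegments {d : ℕ} (x : Fin d → Fin 2) : List (Set (Fin 2)) :=
  (List.finRange d).map fun j => {0, 1 - x j}

@[simp]
theorem length_complSegments {d : ℕ} (x : Fin d → Fin 2) : (complSegments x).length = d := by
  simp [complSegments]

theorem zero_mem_of_mem_flatMap_complSegments {ι : Type*} {d : ℕ} {L : List ι}
    {x : ι → Fin d → Fin 2} {C : Set (Fin 2)} (h : C ∈ L.flatMap fun i => complSegments (x i)) :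
    0 ∈ C := by
  simp only [List.mem_flatMap, complSegments, List.mem_map] at h
  obtain ⟨i, -, j, -, rfl⟩ := h
  exact Set.mem_insert _ _

theorem forall₂_ofFn_complSegments_iff {d : ℕ} (x y : Fin d → Fin 2) :
    List.Forall₂ (· ∈ ·) (List.ofFn y) (complSegments x) ↔ ∑ j, (x j : ℕ) * y j = 0 := by
  rw [complSegments, List.ofFn_eq_map, List.forall₂_map_left_iff, List.forall₂_map_right_iff,
    List.forall₂_same, Finset.sum_eq_zero_iff]
  simp only [List.mem_finRange, Finset.mem_univ, true_implies, mem_zero_one_sub_iff_mul_eq_zero]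

/-- For binary vectors `v 0, …, v (k-1)` of length `d` and
`T1 = ∏_{i} ∏_{j} {0, 1 - v i j}`, the string `0^{a·d} · (v b) · 0^{(k-1-a)·d}`
(with `a` zero-indexed, corresponding to `0^{(a-1)d} · v^b · 0^{(k-a)d}` for one-indexed `a`)
belongs to `L(T1)` iff `v a` and `v b` are orthogonal. -/
theorem mem_T1_iff_orthogonal (k d : ℕ) (v : Fin k → Fin d → Fin 2) (a b : Fin k) :
    (List.replicate ((a : ℕ) * d) (0 : Fin 2) ++ List.ofFn (v b) ++
        List.replicate ((k - 1 - (a : ℕ)) * d) (0 : Fin 2)) ∈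
      EDLang ((List.finRange k).flatMap fun i =>
        (List.finRange d).map fun j => ({[(0 : Fin 2)], [1 - v i j]} : Set (List (Fin 2)))) ↔
      ∑ j : Fin d, ((v a j : ℕ) * (v b j : ℕ)) = 0 := by
  have hT1 : ((List.finRange k).flatMap fun i =>
      (List.finRange d).map fun j => ({[(0 : Fin 2)], [1 - v i j]} : Set (List (Fin 2)))) =
      ((List.finRange k).flatMap fun i => complSegments (v i)).map (Set.image fun c => [c]) := by
    simp [List.map_flatMap, complSegments, Function.comp_def, Set.image_pair]
  have hsplit : List.finRange k =
      (List.finRange k).take a ++ a :: (List.finRange k).drop (a + 1) := by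
    nth_rw 1 [← List.take_append_drop a (List.finRange k), List.drop_eq_getElem_cons (by simp)]
    simp
  rw [hT1, mem_EDLang_map_image_singleton_iff, hsplit, List.flatMap_append, List.flatMap_cons,
    ← List.append_assoc, List.forall₂_replicate_append_append_replicate_iff,
    forall₂_ofFn_complSegments_iff]
  · exact fun _ => zero_mem_of_mem_flatMap_complSegments
  · exact fun _ => zero_mem_of_mem_flatMap_complSegments
  · rw [List.length_flatMap_of_forall_length_eq fun _ _ => length_complSegments _]
    simp [a.isLt.le]
  · rw [List.length_flatMap_of_forall_length_eq fun _ _ => length_complSegments _]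
    simp [Nat.sub_sub, Nat.add_comm]
  · simp
end

section
/- Let D ≥ 1 and let s ∈ [1,D] divide D. Let A, B, C be D×D Boolean matrices with rows and columns indexed by [0,D). Over the alphabet consisting of distinct letters a, $, letters x̄ for each x ∈ [0,s), and letters v_i for each i ∈ [0,D), define the ED string T1 = X1 · X2 · X3 where: X1 contains the string v_i x̄ a^j whenever A[i, x·(D/s)+j] = 1; X2 contains the string a^{D/s−j} x̄ $ $ ȳ a^{D/s−k} whenever B[x·(D/s)+j, y·(D/s)+k] = 1; and X3 contains the string a^k ȳ v_i whenever C[y·(D/s)+k, i] = 1 (where i ranges over [0,D), j and k over [0,D/s), and x, y over [0,s)). Define the ED string T2 of length 1 whose single segment is { P(i,x,y) = v_i x̄ a^{D/s} x̄ $ $ ȳ a^{D/s} ȳ v_i : i ∈ [0,D), x, y ∈ [0,s) }. Then L(T1) ∩ L(T2) ≠ ∅ if and only if there exist indices i, j', k' ∈ [0,D) with A[i,j'] = B[j',k'] = C[k',i] = 1. -/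
/-- The alphabet of the triangle-detection construction: a letter `a`, a letter `$`,
letters `x̄` (for `x ∈ [0,s)`) and letters `v_i` (for `i ∈ [0,D)`); all pairwise distinct. -/
inductive TDLetter : Type
  | a : TDLetter
  | dollar : TDLetter
  | xbar : ℕ → TDLetter
  | vlet : ℕ → TDLetter
  deriving DecidableEq

/-- The string `P(i,x,y) = v_i x̄ a^{e} x̄ $ $ ȳ a^{e} ȳ v_i` (with `e = D/s`). -/
def Pstr (e i x y : ℕ) : List TDLetter :=
  [TDLetter.vlet i, TDLetter.xbar x] ++ List.replicate e TDLetter.a ++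
    [TDLetter.xbar x, TDLetter.dollar, TDLetter.dollar, TDLetter.xbar y] ++
    List.replicate e TDLetter.a ++ [TDLetter.xbar y, TDLetter.vlet i]

open TDLetter

theorem EDLang_singleton {α : Type*} (S : Set (List α)) : EDLang [S] = S := by
  ext w
  simp [EDLang]

theorem mem_EDLang_triple {α : Type*} {S₁ S₂ S₃ : Set (List α)} {w : List α} :
    w ∈ EDLang [S₁, S₂, S₃] ↔ ∃ w₁ ∈ S₁, ∃ w₂ ∈ S₂, ∃ w₃ ∈ S₃, w = w₁ ++ w₂ ++ w₃ := by
  simp [EDLang, List.append_assoc, and_assoc]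

theorem List.replicate_append_cons_inj {α : Type*} {c b b' : α} {m n : ℕ} {u u' : List α}
    (hb : b ≠ c) (hb' : b' ≠ c)
    (h : List.replicate m c ++ b :: u = List.replicate n c ++ b' :: u') :
    m = n ∧ b = b' ∧ u = u' := by
  induction m generalizing n with
  | zero => cases n <;> simp_all [List.replicate_succ, eq_comm]
  | succ m ih =>
    cases n with
    | zero => simp_all [List.replicate_succ]
    | succ n =>
      obtain ⟨rfl, rfl, rfl⟩ := ih (by simpa [List.replicate_succ] using h)
      exact ⟨rfl, rfl, rfl⟩

theorem Nat.mul_add_lt_mul_of_lt {x s j e : ℕ} (hx : x < s) (hj : j < e) :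
    x * e + j < s * e :=
  calc x * e + j < (x + 1) * e := by rw [Nat.succ_mul]; omega
    _ ≤ s * e := Nat.mul_le_mul_right e hx

theorem Nat.exists_mul_add_eq_of_lt_mul {n s e : ℕ} (he : 0 < e) (hn : n < s * e) :
    ∃ x < s, ∃ j < e, x * e + j = n :=
  ⟨n / e, (Nat.div_lt_iff_lt_mul he).2 hn, n % e, Nat.mod_lt n he, by
    rw [Nat.mul_comm]; exact Nat.div_add_mod n e⟩

def leftPiece (i x j : ℕ) : List TDLetter :=
  [vlet i, xbar x] ++ List.replicate j a

def middlePiece (e x j y k : ℕ) : List TDLetter :=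
  List.replicate (e - j) a ++ [xbar x, dollar, dollar, xbar y] ++ List.replicate (e - k) a

def rightPiece (k y i : ℕ) : List TDLetter :=
  List.replicate k a ++ [xbar y, vlet i]

theorem leftPiece_append_middlePiece_append_rightPiece {e i x y j k : ℕ} (hj : j ≤ e)
    (hk : k ≤ e) :
    leftPiece i x j ++ middlePiece e x j y k ++ rightPiece k y i = Pstr e i x y := by
  simp only [leftPiece, middlePiece, rightPiece, Pstr, List.append_assoc]
  rw [← List.append_assoc (List.replicate j a), ← List.replicate_add, Nat.add_sub_cancel' hj,
    ← List.append_assoc (List.replicate (e - k) a), ← List.replicate_add, Nat.sub_add_cancel hk]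

theorem indices_eq_of_pieces_eq_Pstr {e i x y i₁ x₁ j₁ x₂ j₂ y₂ k₂ k₃ y₃ i₃ : ℕ}
    (hj₂ : j₂ ≤ e) (hk₂ : k₂ ≤ e)
    (h : leftPiece i₁ x₁ j₁ ++ middlePiece e x₂ j₂ y₂ k₂ ++ rightPiece k₃ y₃ i₃ =
      Pstr e i x y) :
    x₁ = x₂ ∧ j₁ = j₂ ∧ y₂ = y₃ ∧ k₂ = k₃ ∧ i₁ = i₃ := by
  simp only [leftPiece, middlePiece, rightPiece, Pstr, List.append_assoc, List.cons_append,
    List.nil_append, List.cons.injEq, vlet.injEq, xbar.injEq] at h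
  obtain ⟨rfl, rfl, h⟩ := h
  rw [← List.append_assoc, ← List.replicate_add] at h
  obtain ⟨hj, hx, h⟩ := List.replicate_append_cons_inj (by simp) (by simp) h
  simp only [xbar.injEq, List.cons.injEq, true_and] at hx h
  obtain ⟨rfl, h⟩ := h
  rw [← List.append_assoc, ← List.replicate_add] at h
  obtain ⟨hk, hy, h⟩ := List.replicate_append_cons_inj (by simp) (by simp) h
  simp only [xbar.injEq, List.cons.injEq, vlet.injEq, and_true] at hy h
  exact ⟨hx.symm, by omega, hy.symm, by omega, h.symm⟩

theorem triangle_reduction_general (D s : ℕ) (hD : 1 ≤ D) (hdvd : s ∣ D)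
    (A B C : ℕ → ℕ → Bool) (X1 X2 X3 Y : Set (List TDLetter))
    (hX1 : X1 = { w | ∃ i x j : ℕ, i < D ∧ x < s ∧ j < D / s ∧
      A i (x * (D / s) + j) = true ∧
      w = [TDLetter.vlet i, TDLetter.xbar x] ++ List.replicate j TDLetter.a })
    (hX2 : X2 = { w | ∃ x j y k : ℕ, x < s ∧ j < D / s ∧ y < s ∧ k < D / s ∧
      B (x * (D / s) + j) (y * (D / s) + k) = true ∧
      w = List.replicate (D / s - j) TDLetter.a ++
        [TDLetter.xbar x, TDLetter.dollar, TDLetter.dollar, TDLetter.xbar y] ++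
        List.replicate (D / s - k) TDLetter.a })
    (hX3 : X3 = { w | ∃ y k i : ℕ, y < s ∧ k < D / s ∧ i < D ∧
      C (y * (D / s) + k) i = true ∧
      w = List.replicate k TDLetter.a ++ [TDLetter.xbar y, TDLetter.vlet i] })
    (hY : Y = { w | ∃ i x y : ℕ, i < D ∧ x < s ∧ y < s ∧ w = Pstr (D / s) i x y }) :
    (EDLang [X1, X2, X3] ∩ EDLang [Y]).Nonempty ↔
      ∃ i j k : ℕ, i < D ∧ j < D ∧ k < D ∧
        A i j = true ∧ B j k = true ∧ C k i = true := by
  subst hX1 hX2 hX3 hY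
  set e := D / s
  have hDe : s * e = D := Nat.mul_div_cancel' hdvd
  have he : 0 < e := Nat.pos_of_mul_pos_left (hDe ▸ hD)
  simp only [Set.Nonempty, Set.mem_inter_iff, mem_EDLang_triple, EDLang_singleton]
  constructor
  · rintro ⟨_, ⟨_, ⟨i, x, j, hi, hx, hj, hA, rfl⟩, _, ⟨x', j', y, k, -, hj', hy, hk, hB, rfl⟩,
      _, ⟨y', k', i', -, -, -, hC, rfl⟩, rfl⟩, ⟨_, _, _, -, -, -, hP⟩⟩
    obtain ⟨rfl, rfl, rfl, rfl, rfl⟩ := indices_eq_of_pieces_eq_Pstr hj'.le hk.le hP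
    exact ⟨i, x * e + j, y * e + k, hi, hDe ▸ Nat.mul_add_lt_mul_of_lt hx hj,
      hDe ▸ Nat.mul_add_lt_mul_of_lt hy hk, hA, hB, hC⟩
  · rintro ⟨i, _, _, hi, hjD, hkD, hA, hB, hC⟩
    obtain ⟨x, hx, j, hj, rfl⟩ := Nat.exists_mul_add_eq_of_lt_mul he (hDe ▸ hjD)
    obtain ⟨y, hy, k, hk, rfl⟩ := Nat.exists_mul_add_eq_of_lt_mul he (hDe ▸ hkD)
    exact ⟨_, ⟨_, ⟨i, x, j, hi, hx, hj, hA, rfl⟩, _, ⟨x, j, y, k, hx, hj, hy, hk, hB, rfl⟩,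
      _, ⟨y, k, i, hy, hk, hi, hC, rfl⟩, rfl⟩,
      ⟨i, x, y, hi, hx, hy, leftPiece_append_middlePiece_append_rightPiece hj.le hk.le⟩⟩

/-- The triangle-detection reduction: with `T1 = X1 · X2 · X3` and `T2` (of length 1) as in
the construction, `L(T1) ∩ L(T2) ≠ ∅` iff the Boolean matrices `A, B, C` have a triangle. -/
theorem triangle_reduction (D s : ℕ) (hD : 1 ≤ D) (hs1 : 1 ≤ s) (hsD : s ≤ D) (hdvd : s ∣ D)
    (A B C : ℕ → ℕ → Bool) (X1 X2 X3 Y : Set (List TDLetter))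
    (hX1 : X1 = { w | ∃ i x j : ℕ, i < D ∧ x < s ∧ j < D / s ∧
      A i (x * (D / s) + j) = true ∧
      w = [TDLetter.vlet i, TDLetter.xbar x] ++ List.replicate j TDLetter.a })
    (hX2 : X2 = { w | ∃ x j y k : ℕ, x < s ∧ j < D / s ∧ y < s ∧ k < D / s ∧
      B (x * (D / s) + j) (y * (D / s) + k) = true ∧
      w = List.replicate (D / s - j) TDLetter.a ++
        [TDLetter.xbar x, TDLetter.dollar, TDLetter.dollar, TDLetter.xbar y] ++
        List.replicate (D / s - k) TDLetter.a })
    (hX3 : X3 = { w | ∃ y k i : ℕ, y < s ∧ k < D / s ∧ i < D ∧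
      C (y * (D / s) + k) i = true ∧
      w = List.replicate k TDLetter.a ++ [TDLetter.xbar y, TDLetter.vlet i] })
    (hY : Y = { w | ∃ i x y : ℕ, i < D ∧ x < s ∧ y < s ∧ w = Pstr (D / s) i x y }) :
    (EDLang [X1, X2, X3] ∩ EDLang [Y]).Nonempty ↔
      ∃ i j k : ℕ, i < D ∧ j < D ∧ k < D ∧
        A i j = true ∧ B j k = true ∧ C k i = true :=
  triangle_reduction_general D s hD hdvd A B C X1 X2 X3 Y hX1 hX2 hX3 hY
end
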